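/- For α ∈ {2, −2}, define f_α(x,y) = (xy + 1)·x·(x² − 1)·(x + α). Then: (i) f_α(β,β) ≥ 0 for every β ∈ ℤ; (ii) f_α(β, β^τ) = 0 for every β ∈ A with β ≠ α (where β^τ = β for integer β, and β^τ is the ℚ(√5)-conjugate for β ∈ {±φ, ±φ^τ}); and (iii) f_α(α, α) = 120 > 0. -/
import Mathlib


noncomputable def phi : ℝ := (1 + Real.sqrt 5) / 2
noncomputable def phiTau : ℝ := (1 - Real.sqrt 5) / 2

/-- The conjugate pairs `(α, α^τ)` for `α ∈ A = {0, ±1, ±2, ±φ, ±φ^τ}`, where `τ` fixes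
the integers and swaps `φ ↔ φ^τ`. -/
noncomputable def conjPairs : Set (ℝ × ℝ) :=
  {(0, 0), (1, 1), (-1, -1), (2, 2), (-2, -2),
    (phi, phiTau), (-phi, -phiTau), (phiTau, phi), (-phiTau, -phi)}

/-- `f_α(x,y) = (xy + 1)·x·(x² - 1)·(x + α)` for `α = ±2`. -/
def fpm2 (α x y : ℝ) : ℝ := (x * y + 1) * x * (x ^ 2 - 1) * (x + α)

lemma four_aux (k : ℤ) (hk : 0 ≤ k) : 0 ≤ k * (k + 1) * (k + 2) * (k + 3) :=
  mul_nonneg (mul_nonneg (mul_nonneg hk (by omega)) (by omega)) (by omega)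

lemma four_consec (n : ℤ) : 0 ≤ n * (n + 1) * (n + 2) * (n + 3) := by
  have h : n ≤ -3 ∨ n = -2 ∨ n = -1 ∨ 0 ≤ n := by omega
  rcases h with h | h | h | h
  · have h1 := four_aux (-n - 3) (by omega)
    have e : (-n - 3) * (-n - 3 + 1) * (-n - 3 + 2) * (-n - 3 + 3)
        = n * (n + 1) * (n + 2) * (n + 3) := by ring
    linarith
  · subst h; norm_num
  · subst h; norm_num
  · exact four_aux n h

lemma fz (a x y : ℝ) (h : x * y = -1) : fpm2 a x y = 0 := by
  unfold fpm2; linear_combination (x * (x ^ 2 - 1) * (x + a)) * h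

lemma phi_mul : phi * phiTau = -1 := by
  have h5 : Real.sqrt 5 ^ 2 = 5 := Real.sq_sqrt (by norm_num)
  unfold phi phiTau
  nlinarith [h5]

/-- For `α ∈ {2, -2}`: (i) `f_α(β,β) ≥ 0` for all `β ∈ ℤ`; (ii) `f_α(β,β^τ) = 0` for all
`β ∈ A` with `β ≠ α`; (iii) `f_α(α,α) = 120 > 0`. -/
theorem fpm2_properties (α : ℝ) (hα : α = 2 ∨ α = -2) :
    (∀ β : ℤ, 0 ≤ fpm2 α (β : ℝ) (β : ℝ)) ∧
    (∀ p ∈ conjPairs, p.1 ≠ α → fpm2 α p.1 p.2 = 0) ∧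
    (fpm2 α α α = 120 ∧ (0 : ℝ) < 120) := by
  refine ⟨?_, ?_, ?_, by norm_num⟩
  · intro β
    rcases hα with rfl | rfl
    · have h := four_consec (β - 1)
      have h' : (0 : ℝ) ≤ ((β - 1) * β * (β + 1) * (β + 2) : ℤ) := by
        exact_mod_cast (by nlinarith : (0:ℤ) ≤ (β - 1) * β * (β + 1) * (β + 2))
      push_cast at h'
      unfold fpm2
      nlinarith [sq_nonneg ((β : ℝ)), h']
    · have h := four_consec (β - 2)
      have h' : (0 : ℝ) ≤ ((β - 2) * (β - 1) * β * (β + 1) : ℤ) := by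
        exact_mod_cast (by nlinarith : (0:ℤ) ≤ (β - 2) * (β - 1) * β * (β + 1))
      push_cast at h'
      unfold fpm2
      nlinarith [sq_nonneg ((β : ℝ)), h']
  · intro p hp hne
    have hm := phi_mul
    simp only [conjPairs, Set.mem_insert_iff, Set.mem_singleton_iff] at hp
    rcases hα with rfl | rfl <;>
      rcases hp with rfl | rfl | rfl | rfl | rfl | rfl | rfl | rfl | rfl <;>
      first
        | exact absurd rfl hne
        | exact fz _ _ _ (by linear_combination hm)
        | norm_num [fpm2]
  · rcases hα with rfl | rfl <;> norm_num [fpm2]
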